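/- Let r ≥ 1 and n ≥ 1, and let μ, λ be r-partitions of n and n+1 respectively with μ_a ⊆ λ_a for every 1 ≤ a ≤ r. Assume that neither μ nor λ is nested and that there exists a nested r-partition ν of n−1 with ν_a ⊆ μ_a for every a. Let e+1 be the unique index with μ_{e+1} ≠ ν_{e+1} and let v be the unique cell with μ_{e+1} \ ν_{e+1} = {v}. Then 1 ≤ e ≤ r−1, v ∉ μ_e, S₂(μ,λ) = ∅ and S₁(μ,λ) ⊆ {(e+1, e, v)}; moreover, if v ∉ λ_e then S₁(μ,λ) = {(e+1, e, v)}. -/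
import Mathlib


/-- A Young diagram, identified with a finite set of cells `s = (i(s), j(s))` in
`ℤ≥1 × ℤ≥1`: whenever `(i, j)` is a cell and `1 ≤ i' ≤ i`, `1 ≤ j' ≤ j`, then `(i', j')`
is also a cell. -/
def IsYoung (ν : Finset (ℕ × ℕ)) : Prop :=
  (∀ c ∈ ν, 1 ≤ c.1 ∧ 1 ≤ c.2) ∧
    (∀ c ∈ ν, ∀ i' j' : ℕ, 1 ≤ i' → i' ≤ c.1 → 1 ≤ j' → j' ≤ c.2 → (i', j') ∈ ν)

/-- `ν_i`: the number of cells in column `i` of `ν`. -/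
def colLen (ν : Finset (ℕ × ℕ)) (i : ℕ) : ℕ := (ν.filter (fun c => c.1 = i)).card

/-- `νᵗ_j`: the number of cells in row `j` of `ν`. -/
def rowLen (ν : Finset (ℕ × ℕ)) (j : ℕ) : ℕ := (ν.filter (fun c => c.2 = j)).card

/-- The (possibly negative) leg `ℓ_ν(s) = ν_{i(s)} − j(s)`. -/
def leg (ν : Finset (ℕ × ℕ)) (s : ℕ × ℕ) : ℤ := (colLen ν s.1 : ℤ) - (s.2 : ℤ)

/-- The (possibly negative) arm `a_ν(s) = νᵗ_{j(s)} − i(s)`. -/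
def arm (ν : Finset (ℕ × ℕ)) (s : ℕ × ℕ) : ℤ := (rowLen ν s.2 : ℤ) - (s.1 : ℤ)

lemma mem_iff_le_colLen {ν : Finset (ℕ × ℕ)} (hY : IsYoung ν) {i j : ℕ}
    (hi : 1 ≤ i) (hj : 1 ≤ j) : (i, j) ∈ ν ↔ j ≤ colLen ν i := by
  constructor
  · intro hmem
    have hsub : (Finset.Icc 1 j).image (fun t => (i, t)) ⊆ ν.filter (fun c => c.1 = i) := by
      intro c hc
      simp only [Finset.mem_image, Finset.mem_Icc] at hc
      obtain ⟨t, ⟨ht1, ht2⟩, rfl⟩ := hc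
      rw [Finset.mem_filter]
      exact ⟨hY.2 _ hmem i t hi le_rfl ht1 ht2, rfl⟩
    have h1 := Finset.card_le_card hsub
    have h2 : ((Finset.Icc 1 j).image (fun t => (i, t))).card = j := by
      rw [Finset.card_image_of_injective _ (fun a b h => by simpa using h)]
      simp
    rw [h2] at h1
    exact h1
  · intro hle
    set C := ν.filter (fun c => c.1 = i) with hC
    have hne : C.Nonempty := Finset.card_pos.mp (lt_of_lt_of_le hj hle)
    have hinj : Set.InjOn Prod.snd (C : Set (ℕ × ℕ)) := by
      intro a ha b hb hab
      rw [hC, Finset.mem_coe, Finset.mem_filter] at ha hb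
      exact Prod.ext (ha.2.trans hb.2.symm) hab
    have him : C.image Prod.snd ⊆ Finset.Icc 1 ((C.image Prod.snd).max' (hne.image _)) := by
      intro t ht
      rw [Finset.mem_Icc]
      refine ⟨?_, Finset.le_max' _ _ ht⟩
      obtain ⟨c, hc, rfl⟩ := Finset.mem_image.mp ht
      exact (hY.1 c (Finset.mem_filter.mp hc).1).2
    set m := (C.image Prod.snd).max' (hne.image _) with hm
    have hcm : C.card ≤ m := by
      have := Finset.card_le_card him
      rwa [Finset.card_image_of_injOn hinj, Nat.card_Icc, Nat.add_sub_cancel] at this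
    have hmem : (i, m) ∈ ν := by
      have hmax := Finset.max'_mem (C.image Prod.snd) (hne.image Prod.snd)
      rw [← hm] at hmax
      obtain ⟨c, hc, hc2⟩ := Finset.mem_image.mp hmax
      obtain ⟨hcν, hc1⟩ := Finset.mem_filter.mp hc
      have : c = (i, m) := Prod.ext hc1 hc2
      rwa [← this]
    exact hY.2 _ hmem i j hi le_rfl hj (le_trans hle hcm)

lemma mem_iff_le_rowLen {ν : Finset (ℕ × ℕ)} (hY : IsYoung ν) {i j : ℕ}
    (hi : 1 ≤ i) (hj : 1 ≤ j) : (i, j) ∈ ν ↔ i ≤ rowLen ν j := by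
  constructor
  · intro hmem
    have hsub : (Finset.Icc 1 i).image (fun t => (t, j)) ⊆ ν.filter (fun c => c.2 = j) := by
      intro c hc
      simp only [Finset.mem_image, Finset.mem_Icc] at hc
      obtain ⟨t, ⟨ht1, ht2⟩, rfl⟩ := hc
      rw [Finset.mem_filter]
      exact ⟨hY.2 _ hmem t j ht1 ht2 hj le_rfl, rfl⟩
    have h1 := Finset.card_le_card hsub
    have h2 : ((Finset.Icc 1 i).image (fun t => (t, j))).card = i := by
      rw [Finset.card_image_of_injective _ (fun a b h => by simpa using h)]
      simp
    rw [h2] at h1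
    exact h1
  · intro hle
    set C := ν.filter (fun c => c.2 = j) with hC
    have hne : C.Nonempty := Finset.card_pos.mp (lt_of_lt_of_le hi hle)
    have hinj : Set.InjOn Prod.fst (C : Set (ℕ × ℕ)) := by
      intro a ha b hb hab
      rw [hC, Finset.mem_coe, Finset.mem_filter] at ha hb
      exact Prod.ext hab (ha.2.trans hb.2.symm)
    have him : C.image Prod.fst ⊆ Finset.Icc 1 ((C.image Prod.fst).max' (hne.image _)) := by
      intro t ht
      rw [Finset.mem_Icc]
      refine ⟨?_, Finset.le_max' _ _ ht⟩
      obtain ⟨c, hc, rfl⟩ := Finset.mem_image.mp ht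
      exact (hY.1 c (Finset.mem_filter.mp hc).1).1
    set m := (C.image Prod.fst).max' (hne.image _) with hm
    have hcm : C.card ≤ m := by
      have := Finset.card_le_card him
      rwa [Finset.card_image_of_injOn hinj, Nat.card_Icc, Nat.add_sub_cancel] at this
    have hmem : (m, j) ∈ ν := by
      have hmax := Finset.max'_mem (C.image Prod.fst) (hne.image Prod.fst)
      rw [← hm] at hmax
      obtain ⟨c, hc, hc1⟩ := Finset.mem_image.mp hmax
      obtain ⟨hcν, hc2⟩ := Finset.mem_filter.mp hc
      have : c = (m, j) := Prod.ext hc1 hc2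
      rwa [← this]
    exact hY.2 _ hmem i j hi (le_trans hle hcm) hj le_rfl

lemma colLen_mono {ν μ : Finset (ℕ × ℕ)} (h : ν ⊆ μ) (i : ℕ) : colLen ν i ≤ colLen μ i :=
  Finset.card_le_card (Finset.filter_subset_filter _ h)

lemma rowLen_mono {ν μ : Finset (ℕ × ℕ)} (h : ν ⊆ μ) (j : ℕ) : rowLen ν j ≤ rowLen μ j :=
  Finset.card_le_card (Finset.filter_subset_filter _ h)

lemma colLen_insert_self {ν : Finset (ℕ × ℕ)} {v : ℕ × ℕ} (hv : v ∉ ν) :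
    colLen (insert v ν) v.1 = colLen ν v.1 + 1 := by
  unfold colLen
  rw [Finset.filter_insert, if_pos rfl,
    Finset.card_insert_of_notMem (fun h => hv (Finset.mem_filter.mp h).1)]

lemma rowLen_insert_self {ν : Finset (ℕ × ℕ)} {v : ℕ × ℕ} (hv : v ∉ ν) :
    rowLen (insert v ν) v.2 = rowLen ν v.2 + 1 := by
  unfold rowLen
  rw [Finset.filter_insert, if_pos rfl,
    Finset.card_insert_of_notMem (fun h => hv (Finset.mem_filter.mp h).1)]

lemma corner_col {νf μf : Finset (ℕ × ℕ)} (hYν : IsYoung νf) (hYμ : IsYoung μf)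
    {v : ℕ × ℕ} (hvν : v ∉ νf) (hμ : μf = insert v νf) : colLen μf v.1 = v.2 := by
  have hvμ : v ∈ μf := hμ ▸ Finset.mem_insert_self v νf
  obtain ⟨hi, hj⟩ := hYμ.1 v hvμ
  have hle : v.2 ≤ colLen μf v.1 := (mem_iff_le_colLen hYμ hi hj).mp (by simpa using hvμ)
  by_contra hne
  have hlt : v.2 < colLen μf v.1 := lt_of_le_of_ne hle (Ne.symm hne)
  set L := colLen μf v.1 with hL
  have hL1 : 1 ≤ L := le_trans hj hle
  have hmem : (v.1, L) ∈ μf := (mem_iff_le_colLen hYμ hi hL1).mpr le_rfl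
  have hneq : (v.1, L) ≠ v := fun h => by
    have : L = v.2 := congrArg Prod.snd h
    omega
  have : (v.1, L) ∈ νf := by
    rw [hμ] at hmem
    exact (Finset.mem_insert.mp hmem).resolve_left hneq
  exact hvν (by simpa using hYν.2 _ this v.1 v.2 hi le_rfl hj (le_of_lt hlt))

lemma corner_row {νf μf : Finset (ℕ × ℕ)} (hYν : IsYoung νf) (hYμ : IsYoung μf)
    {v : ℕ × ℕ} (hvν : v ∉ νf) (hμ : μf = insert v νf) : rowLen μf v.2 = v.1 := by
  have hvμ : v ∈ μf := hμ ▸ Finset.mem_insert_self v νf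
  obtain ⟨hi, hj⟩ := hYμ.1 v hvμ
  have hle : v.1 ≤ rowLen μf v.2 := (mem_iff_le_rowLen hYμ hi hj).mp (by simpa using hvμ)
  by_contra hne
  have hlt : v.1 < rowLen μf v.2 := lt_of_le_of_ne hle (Ne.symm hne)
  set L := rowLen μf v.2 with hL
  have hL1 : 1 ≤ L := le_trans hi hle
  have hmem : (L, v.2) ∈ μf := (mem_iff_le_rowLen hYμ hL1 hj).mpr le_rfl
  have hneq : (L, v.2) ≠ v := fun h => by
    have : L = v.1 := congrArg Prod.fst h
    omega
  have : (L, v.2) ∈ νf := by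
    rw [hμ] at hmem
    exact (Finset.mem_insert.mp hmem).resolve_left hneq
  exact hvν (by simpa using hYν.2 _ this v.1 v.2 hi (le_of_lt hlt) hj le_rfl)

/-- An `r`-partition `μ = (μ₁, …, μ_r)` (indexed by `Fin r`, with index `a : Fin r`
corresponding to `μ_{a+1}`) is nested if `μ_r ⊆ μ_{r−1} ⊆ … ⊆ μ₁`. -/
def Nested {r : ℕ} (μ : Fin r → Finset (ℕ × ℕ)) : Prop :=
  ∀ a b : Fin r, a ≤ b → μ b ⊆ μ a

/-- The set `S₁(μ)` of triples `(b, c, s)` with `1 ≤ c < b ≤ r`, `s ∈ μ_b \ μ_c`,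
`b − c + ℓ_{μ_c}(s) = 0` and `b − c − a_{μ_b}(s) − 1 = 0`. -/
def S1 {r : ℕ} (μ : Fin r → Finset (ℕ × ℕ)) : Set (Fin r × Fin r × (ℕ × ℕ)) :=
  {t | t.2.1 < t.1 ∧ t.2.2 ∈ μ t.1 ∧ t.2.2 ∉ μ t.2.1 ∧
    ((t.1 : ℕ) : ℤ) - ((t.2.1 : ℕ) : ℤ) + leg (μ t.2.1) t.2.2 = 0 ∧
    ((t.1 : ℕ) : ℤ) - ((t.2.1 : ℕ) : ℤ) - arm (μ t.1) t.2.2 - 1 = 0}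

/-- The set `S₂(μ)` of triples `(b, c, s)` with `1 ≤ b < c ≤ r`, `s ∈ μ_c \ μ_b`,
`b − c − ℓ_{μ_b}(s) − 1 = 0` and `b − c + a_{μ_c}(s) = 0`. -/
def S2 {r : ℕ} (μ : Fin r → Finset (ℕ × ℕ)) : Set (Fin r × Fin r × (ℕ × ℕ)) :=
  {t | t.1 < t.2.1 ∧ t.2.2 ∈ μ t.2.1 ∧ t.2.2 ∉ μ t.1 ∧
    ((t.1 : ℕ) : ℤ) - ((t.2.1 : ℕ) : ℤ) - leg (μ t.1) t.2.2 - 1 = 0 ∧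
    ((t.1 : ℕ) : ℤ) - ((t.2.1 : ℕ) : ℤ) + arm (μ t.2.1) t.2.2 = 0}

/-- For a pair `μ ⊆ λ` of `r`-partitions of `n` and `n + 1` with `λ_d \ μ_d = {u}` at the
unique differing index `d`, the set `S₁(μ, λ)` of triples `(b, c, s)` with `s ∈ λ_b`,
`(b, s) ≠ (d, u)`, `b − c + ℓ_{λ_c}(s) = 0` and `b − c − a_{μ_b}(s) − 1 = 0`. -/
def S1p {r : ℕ} (μ lam : Fin r → Finset (ℕ × ℕ)) (d : Fin r) (u : ℕ × ℕ) :
    Set (Fin r × Fin r × (ℕ × ℕ)) :=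
  {t | t.2.2 ∈ lam t.1 ∧ (t.1, t.2.2) ≠ (d, u) ∧
    ((t.1 : ℕ) : ℤ) - ((t.2.1 : ℕ) : ℤ) + leg (lam t.2.1) t.2.2 = 0 ∧
    ((t.1 : ℕ) : ℤ) - ((t.2.1 : ℕ) : ℤ) - arm (μ t.1) t.2.2 - 1 = 0}

/-- For a pair `μ ⊆ λ` of `r`-partitions of `n` and `n + 1`, the set `S₂(μ, λ)` of triples
`(b, c, s)` with `s ∈ μ_c`, `b − c − ℓ_{μ_b}(s) − 1 = 0` and `b − c + a_{λ_c}(s) = 0`. -/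
def S2p {r : ℕ} (μ lam : Fin r → Finset (ℕ × ℕ)) :
    Set (Fin r × Fin r × (ℕ × ℕ)) :=
  {t | t.2.2 ∈ μ t.2.1 ∧
    ((t.1 : ℕ) : ℤ) - ((t.2.1 : ℕ) : ℤ) - leg (μ t.1) t.2.2 - 1 = 0 ∧
    ((t.1 : ℕ) : ℤ) - ((t.2.1 : ℕ) : ℤ) + arm (lam t.2.1) t.2.2 = 0}

lemma mem_iff_le_colLen' {ν : Finset (ℕ × ℕ)} (hY : IsYoung ν) {s : ℕ × ℕ}
    (hi : 1 ≤ s.1) (hj : 1 ≤ s.2) : s ∈ ν ↔ s.2 ≤ colLen ν s.1 := by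
  have := mem_iff_le_colLen hY hi hj
  rwa [Prod.mk.eta] at this

lemma mem_iff_le_rowLen' {ν : Finset (ℕ × ℕ)} (hY : IsYoung ν) {s : ℕ × ℕ}
    (hi : 1 ≤ s.1) (hj : 1 ≤ s.2) : s ∈ ν ↔ s.1 ≤ rowLen ν s.2 := by
  have := mem_iff_le_rowLen hY hi hj
  rwa [Prod.mk.eta] at this

/-- Let `μ ⊆ λ` be `r`-partitions of `n` and `n + 1`, neither nested,
and suppose there is a nested `r`-partition `ν` of `n − 1` with `ν ⊆ μ`. Let `f` (thought of
as `e + 1`) be the unique index with `μ_f ≠ ν_f`, and let `v` be the unique cell with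
`μ_f \ ν_f = {v}`. Then `f ≥ 2` (i.e. `1 ≤ e ≤ r − 1`, where `e + 1 = f`), `v ∉ μ_e`,
`S₂(μ, λ) = ∅` and `S₁(μ, λ) ⊆ {(e+1, e, v)}`; moreover, if `v ∉ λ_e` then
`S₁(μ, λ) = {(e+1, e, v)}`. -/
theorem stmt12 (r n : ℕ) (hr : 1 ≤ r) (hn : 1 ≤ n)
    (μ lam ν : Fin r → Finset (ℕ × ℕ))
    (hYμ : ∀ a, IsYoung (μ a)) (hYlam : ∀ a, IsYoung (lam a)) (hYν : ∀ a, IsYoung (ν a))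
    (hνn : ∑ a, (ν a).card = n - 1)
    (hμn : ∑ a, (μ a).card = n) (hlamn : ∑ a, (lam a).card = n + 1)
    (hsubμ : ∀ a, μ a ⊆ lam a) (hsubν : ∀ a, ν a ⊆ μ a)
    (hμnot : ¬ Nested μ) (hlamnot : ¬ Nested lam) (hνnest : Nested ν)
    (d : Fin r) (u : ℕ × ℕ) (hd : lam d \ μ d = {u})
    (f : Fin r) (hf : μ f ≠ ν f) (hfuniq : ∀ a, μ a ≠ ν a → a = f)
    (v : ℕ × ℕ) (hv : μ f \ ν f = {v}) :
    1 ≤ (f : ℕ) ∧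
      ∃ e : Fin r, (e : ℕ) + 1 = (f : ℕ) ∧ v ∉ μ e ∧
        S2p μ lam = ∅ ∧ S1p μ lam d u ⊆ {(f, e, v)} ∧
        (v ∉ lam e → S1p μ lam d u = {(f, e, v)}) := by
  classical
  have hfr := f.isLt
  -- v is the unique cell of μ f \ ν f
  have hνsubf : ν f ⊆ μ f := hsubν f
  have hvd : v ∈ μ f \ ν f := by rw [hv]; exact Finset.mem_singleton_self v
  have hvmem : v ∈ μ f := (Finset.mem_sdiff.mp hvd).1
  have hvν : v ∉ ν f := (Finset.mem_sdiff.mp hvd).2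
  have hμf : insert v (ν f) = μ f := by
    rw [Finset.insert_eq, ← hv, Finset.union_comm]
    exact Finset.union_sdiff_of_subset hνsubf
  have hμ_eq : ∀ a, a ≠ f → μ a = ν a := fun a ha => by
    by_contra hne; exact ha (hfuniq a hne)
  -- u is the unique cell of lam d \ μ d
  have hud : u ∈ lam d \ μ d := by rw [hd]; exact Finset.mem_singleton_self u
  have humem : u ∈ lam d := (Finset.mem_sdiff.mp hud).1
  have huμ : u ∉ μ d := (Finset.mem_sdiff.mp hud).2
  have hlamd : insert u (μ d) = lam d := by
    rw [Finset.insert_eq, ← hd, Finset.union_comm]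
    exact Finset.union_sdiff_of_subset (hsubμ d)
  have hcard_d : (lam d).card = (μ d).card + 1 := by
    rw [← hlamd, Finset.card_insert_of_notMem huμ]
  have hlam_eq : ∀ a, a ≠ d → lam a = μ a := by
    have h1 : ∑ a ∈ Finset.univ.erase d, (lam a).card + (lam d).card = ∑ a, (lam a).card :=
      Finset.sum_erase_add _ _ (Finset.mem_univ d)
    have h2 : ∑ a ∈ Finset.univ.erase d, (μ a).card + (μ d).card = ∑ a, (μ a).card :=
      Finset.sum_erase_add _ _ (Finset.mem_univ d)
    have hsum : ∑ a ∈ Finset.univ.erase d, (μ a).card = ∑ a ∈ Finset.univ.erase d, (lam a).card := by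
      omega
    intro a ha
    have hall := (Finset.sum_eq_sum_iff_of_le
      (fun b _ => Finset.card_le_card (hsubμ b))).mp hsum a
      (Finset.mem_erase.mpr ⟨ha, Finset.mem_univ a⟩)
    exact (Finset.eq_of_subset_of_card_le (hsubμ a) hall.ge).symm
  -- since μ is not nested, there is a₀ < f with v ∉ μ a₀
  obtain ⟨a₀, b₀, hab, hnsub⟩ : ∃ a b : Fin r, a ≤ b ∧ ¬ μ b ⊆ μ a := by
    by_contra h
    push_neg at h
    exact hμnot fun a b hab => h a b hab
  have hb₀ : b₀ = f := by
    by_contra hb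
    apply hnsub
    rw [hμ_eq b₀ hb]
    exact (hνnest a₀ b₀ hab).trans (hsubν a₀)
  rw [hb₀] at hnsub hab
  have hva₀ : v ∉ μ a₀ := by
    intro hva
    apply hnsub
    rw [← hμf]
    intro x hx
    rcases Finset.mem_insert.mp hx with rfl | hx
    · exact hva
    · exact hsubν a₀ (hνnest a₀ f hab hx)
  have ha₀f : a₀ ≠ f := fun h => hva₀ (by rw [h]; exact hvmem)
  have hlt : (a₀ : ℕ) < (f : ℕ) := lt_of_le_of_ne (Fin.le_def.mp hab)
    (fun h => ha₀f (Fin.ext h))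
  have hf1 : 1 ≤ (f : ℕ) := by omega
  -- define e
  set e : Fin r := ⟨(f : ℕ) - 1, by omega⟩ with he_def
  have hef : (e : ℕ) + 1 = (f : ℕ) := by
    show (f : ℕ) - 1 + 1 = (f : ℕ); omega
  have hef' : e ≠ f := fun h => by
    have := congrArg Fin.val h; omega
  have hve : v ∉ μ e := by
    rw [hμ_eq e hef']
    intro hvE
    have hvA : v ∈ ν a₀ := hνnest a₀ e (Fin.le_def.mpr (by omega)) hvE
    rw [← hμ_eq a₀ ha₀f] at hvA
    exact hva₀ hvA
  -- corner facts
  obtain ⟨hi1, hj1⟩ := (hYμ f).1 v hvmem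
  have hcol : colLen (μ f) v.1 = v.2 := corner_col (hYν f) (hYμ f) hvν hμf.symm
  have hrow : rowLen (μ f) v.2 = v.1 := corner_row (hYν f) (hYμ f) hvν hμf.symm
  have hcolν : colLen (ν f) v.1 + 1 = v.2 := by
    have h := colLen_insert_self hvν (ν := ν f)
    rw [hμf, hcol] at h
    omega
  have hrowν : rowLen (ν f) v.2 + 1 = v.1 := by
    have h := rowLen_insert_self hvν (ν := ν f)
    rw [hμf, hrow] at h
    omega
  -- S2p is empty
  have hS2 : S2p μ lam = ∅ := by
    rw [Set.eq_empty_iff_forall_notMem]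
    rintro ⟨b, c, s⟩ ⟨hs, h1, h2⟩
    dsimp only at hs h1 h2
    obtain ⟨hsi, hsj⟩ := (hYμ c).1 s hs
    rcases Nat.lt_or_ge (c : ℕ) (b : ℕ) with hbc | hbc
    · -- b > c : arm (lam c) s < 0, impossible since s ∈ μ c ⊆ lam c
      have hsl : s ∈ lam c := hsubμ c hs
      have hle := (mem_iff_le_rowLen' (hYlam c) hsi hsj).mp hsl
      unfold arm at h2
      omega
    · -- b ≤ c : leg (μ b) s < 0, so s ∉ μ b
      have hsnb : s ∉ μ b := by
        intro hmem
        have hle := (mem_iff_le_colLen' (hYμ b) hsi hsj).mp hmem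
        unfold leg at h1
        omega
      by_cases hcf : c = f
      · subst hcf
        rw [← hμf] at hs
        rcases Finset.mem_insert.mp hs with rfl | hsν
        · -- s = v, b < f
          have hbf : b ≠ c := fun h => hsnb (by rw [h, ← hμf]; exact Finset.mem_insert_self _ _)
          have hμb : μ b = ν b := hμ_eq b hbf
          have hmono := colLen_mono (hνnest b c (Fin.le_def.mpr hbc)) s.1
          rw [hμb] at hsnb
          unfold leg at h1
          rw [hμb] at h1
          omega
        · exact hsnb (hsubν b (hνnest b c (Fin.le_def.mpr hbc) hsν))
      · rw [hμ_eq c hcf] at hs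
        exact hsnb (hsubν b (hνnest b c (Fin.le_def.mpr hbc) hs))
  -- S1p is contained in {(f, e, v)}
  have hS1sub : S1p μ lam d u ⊆ {(f, e, v)} := by
    rintro ⟨b, c, s⟩ ⟨hs, hne, h1, h2⟩
    dsimp only at hs hne h1 h2
    obtain ⟨hsi, hsj⟩ := (hYlam b).1 s hs
    rcases Nat.lt_or_ge (c : ℕ) (b : ℕ) with hbc | hbc
    · -- b > c
      have hsb : s ∈ μ b := by
        rw [mem_iff_le_rowLen' (hYμ b) hsi hsj]
        unfold arm at h2
        omega
      have hsnc : s ∉ lam c := by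
        intro hmem
        have := (mem_iff_le_colLen' (hYlam c) hsi hsj).mp hmem
        unfold leg at h1
        omega
      have hkey : b = f ∧ s = v := by
        by_cases hbf : b = f
        · subst hbf
          rw [← hμf] at hsb
          rcases Finset.mem_insert.mp hsb with rfl | hsν
          · exact ⟨rfl, rfl⟩
          · exact absurd (hsubμ c (hsubν c (hνnest c b (Fin.le_def.mpr (le_of_lt hbc)) hsν)))
              hsnc
        · rw [hμ_eq b hbf] at hsb
          exact absurd (hsubμ c (hsubν c (hνnest c b (Fin.le_def.mpr (le_of_lt hbc)) hsb)))
            hsnc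
      obtain ⟨rfl, rfl⟩ := hkey
      -- arm (μ b) s = 0 forces c = e
      unfold arm at h2
      rw [hrow] at h2
      have hce : c = e := Fin.ext (by have := hef; omega)
      rw [Set.mem_singleton_iff, hce]
    · -- b ≤ c : contradiction
      have hsnb : s ∉ μ b := by
        intro hmem
        have := (mem_iff_le_rowLen' (hYμ b) hsi hsj).mp hmem
        unfold arm at h2
        omega
      by_cases hbd : b = d
      · subst hbd
        rw [← hlamd] at hs
        rcases Finset.mem_insert.mp hs with rfl | hsμ
        · exact absurd rfl hne
        · exact absurd hsμ hsnb
      · rw [hlam_eq b hbd] at hs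
        exact absurd hs hsnb
  refine ⟨hf1, e, hef, hve, hS2, hS1sub, fun hvle => ?_⟩
  apply Set.Subset.antisymm hS1sub
  intro t ht
  rw [Set.mem_singleton_iff] at ht
  subst ht
  simp only [S1p, Set.mem_setOf_eq]
  refine ⟨hsubμ f hvmem, ?_, ?_, ?_⟩
  · intro h
    rw [Prod.mk.injEq] at h
    obtain ⟨hfd, hvu⟩ := h
    rw [← hfd, ← hvu] at huμ
    exact huμ hvmem
  · -- leg (lam e) v = -1
    have hge : colLen (ν f) v.1 ≤ colLen (lam e) v.1 :=
      le_trans (colLen_mono (hνnest e f (Fin.le_def.mpr (by omega))) v.1)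
        (colLen_mono ((hsubν e).trans (hsubμ e)) v.1)
    have hlt2 : ¬ v.2 ≤ colLen (lam e) v.1 :=
      fun h => hvle ((mem_iff_le_colLen' (hYlam e) hi1 hj1).mpr h)
    unfold leg
    omega
  · unfold arm
    rw [hrow]
    omega
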